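/- Let H₀ ≥ 0 be a self-adjoint operator on a Hilbert space H with one-dimensional kernel spanned by a unit vector Ω, and suppose spec(H₀) ⊂ {0} ∪ [γ, ∞) for some γ > 0. Let V be a bounded self-adjoint operator satisfying the form bound |⟨ψ, Vψ⟩| ≤ β ⟨ψ, H₀ψ⟩ for all ψ ∈ dom(H₀), with 0 ≤ β < 1, and ⟨Ω, VΩ⟩ = 0. Then, setting E = inf spec(H₀ + V), one has spec(H₀ + V) ⊂ {E} ∪ [E + (1-β)γ, ∞), i.e. the gap of H₀ + V above its ground state energy is at least (1-β)γ. Moreover E ≤ 0. -/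

import Mathlib

/-!
The form bound gives `(1 - β) H₀ ≤ H₀ + V`, and `H₀ ≥ γ` on `(ker H₀)ᗮ = Ωᗮ`, so the form of
`H₀ + V` is at least `(1 - β) γ` on `Ωᗮ`; testing on `Ω` itself gives `E ≤ 0`. Now a min-max
argument: if `E < t < (1 - β) γ` were both in the spectrum, bump functions of `H₀ + V` around `E`
and around `t` would produce two nonzero vectors, orthogonal both for the inner product and for the
form of `H₀ + V`, whose Rayleigh quotients are `< (1 - β) γ`. Some nonzero combination of them is
orthogonal to `Ω`, which is impossible.
-/

open scoped InnerProductSpace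

section CFC

variable {R A : Type*} {p : A → Prop} [CommSemiring R] [StarRing R] [MetricSpace R]
  [IsTopologicalSemiring R] [ContinuousStar R] [TopologicalSpace A] [Ring A] [StarRing A]
  [Algebra R A] [ContinuousFunctionalCalculus R A p]

lemma cfc_ne_zero_of_mem_spectrum {f : R → R} {a : A} {x : R} (hx : x ∈ spectrum R a)
    (hfx : f x ≠ 0) (hf : ContinuousOn f (spectrum R a) := by cfc_cont_tac)
    (ha : p a := by cfc_tac) : cfc f a ≠ 0 := fun h ↦
  hfx (eqOn_of_cfc_eq_cfc (h.trans (cfc_const_zero R a).symm) hf continuousOn_const ha hx)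

lemma cfc_mul_cfc_eq_zero {f g : R → R} {a : A} (hfg : ∀ x ∈ spectrum R a, f x * g x = 0)
    (hf : ContinuousOn f (spectrum R a) := by cfc_cont_tac)
    (hg : ContinuousOn g (spectrum R a) := by cfc_cont_tac) :
    cfc f a * cfc g a = 0 := by
  rw [← cfc_mul f g a, cfc_congr hfg, cfc_const_zero]

end CFC

section QuadraticForm

variable {H : Type*} [NormedAddCommGroup H] [InnerProductSpace ℂ H]

lemma mul_norm_sq_le_re_inner_of_algebraMap_le {T : H →L[ℂ] H} {r : ℝ}
    (h : algebraMap ℝ (H →L[ℂ] H) r ≤ T) (x : H) : r * ‖x‖ ^ 2 ≤ (⟪x, T x⟫_ℂ).re := by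
  have hpos := ((ContinuousLinearMap.le_def _ _).mp h).re_inner_nonneg_right x
  rw [sub_apply, inner_sub_right, map_sub, sub_nonneg,
    Algebra.algebraMap_eq_smul_one, smul_apply, one_apply_eq_self,
    ← Complex.coe_smul, inner_smul_right, RCLike.re_to_complex, Complex.re_ofReal_mul] at hpos
  rwa [← inner_self_eq_norm_sq (𝕜 := ℂ) x]

lemma IsSelfAdjoint.re_inner_smul_add_smul_le [CompleteSpace H] {T : H →L[ℂ] H}
    (hT : IsSelfAdjoint T) {x y : H} {μ : ℝ} (hxy : ⟪x, y⟫_ℂ = 0) (hTxy : ⟪x, T y⟫_ℂ = 0)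
    (hx : (⟪x, T x⟫_ℂ).re ≤ μ * ‖x‖ ^ 2) (hy : (⟪y, T y⟫_ℂ).re ≤ μ * ‖y‖ ^ 2) (a b : ℂ) :
    (⟪a • x + b • y, T (a • x + b • y)⟫_ℂ).re ≤ μ * ‖a • x + b • y‖ ^ 2 := by
  have hTyx : ⟪y, T x⟫_ℂ = 0 := by
    rw [← inner_eq_zero_symm] at hTxy
    exact (hT.isSymmetric y x).symm.trans hTxy
  have hform : ⟪a • x + b • y, T (a • x + b • y)⟫_ℂ
      = ((‖a‖ ^ 2 : ℝ) : ℂ) * ⟪x, T x⟫_ℂ + ((‖b‖ ^ 2 : ℝ) : ℂ) * ⟪y, T y⟫_ℂ := by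
    simp only [map_add, map_smul, inner_add_left, inner_add_right, inner_smul_left,
      inner_smul_right, hTxy, hTyx, mul_zero, add_zero, zero_add, ← mul_assoc,
      Complex.mul_conj']
    push_cast; ring
  have hnorm : ‖a • x + b • y‖ ^ 2 = ‖a‖ ^ 2 * ‖x‖ ^ 2 + ‖b‖ ^ 2 * ‖y‖ ^ 2 := by
    rw [norm_add_sq (𝕜 := ℂ), inner_smul_left, inner_smul_right, hxy, mul_zero, mul_zero,
      map_zero, mul_zero, add_zero, norm_smul, norm_smul, mul_pow, mul_pow]
  rw [hform, hnorm, Complex.add_re, Complex.re_ofReal_mul, Complex.re_ofReal_mul]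
  nlinarith [mul_le_mul_of_nonneg_left hx (sq_nonneg ‖a‖),
    mul_le_mul_of_nonneg_left hy (sq_nonneg ‖b‖)]

lemma exists_smul_add_smul_ne_zero_inner_eq_zero {x y : H} (hxy : ⟪x, y⟫_ℂ = 0) (hx : x ≠ 0)
    (hy : y ≠ 0) (Ω : H) : ∃ a b : ℂ, a • x + b • y ≠ 0 ∧ ⟪Ω, a • x + b • y⟫_ℂ = 0 := by
  by_cases hΩx : ⟪Ω, x⟫_ℂ = 0
  · exact ⟨1, 0, by simpa using hx, by simpa using hΩx⟩
  refine ⟨⟪Ω, y⟫_ℂ, -⟪Ω, x⟫_ℂ, fun h ↦ ?_, ?_⟩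
  · have hyx : ⟪y, x⟫_ℂ = 0 := inner_eq_zero_symm.mp hxy
    have := congrArg (fun z ↦ ⟪y, z⟫_ℂ) h
    simp only [inner_add_right, inner_smul_right, hyx, mul_zero, zero_add, inner_zero_right,
      mul_eq_zero, neg_eq_zero, hΩx, false_or, inner_self_eq_zero, hy] at this
  · rw [inner_add_right, inner_smul_right, inner_smul_right]; ring

lemma mul_norm_sq_le_re_inner_add_of_form_bound {H₀ V : H →L[ℂ] H} {γ β : ℝ} (hβ : β ≤ 1)
    {χ : H} (h₀ : γ * ‖χ‖ ^ 2 ≤ (⟪χ, H₀ χ⟫_ℂ).re) (hV : |(⟪χ, V χ⟫_ℂ).re| ≤ β * (⟪χ, H₀ χ⟫_ℂ).re) :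
    (1 - β) * γ * ‖χ‖ ^ 2 ≤ (⟪χ, (H₀ + V) χ⟫_ℂ).re := by
  rw [add_apply, inner_add_right, Complex.add_re]
  nlinarith [(abs_le.mp hV).1]

variable [CompleteSpace H]

lemma IsSelfAdjoint.re_inner_cfc_apply_le {T : H →L[ℂ] H} (hT : IsSelfAdjoint T) {f : ℝ → ℝ}
    (hf : ContinuousOn f (spectrum ℝ T)) {μ : ℝ} (hfμ : ∀ s ∈ spectrum ℝ T, f s ≠ 0 → s ≤ μ)
    (x : H) : (⟪cfc f T x, T (cfc f T x)⟫_ℂ).re ≤ μ * ‖cfc f T x‖ ^ 2 := by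
  set Q := cfc f T
  have hQ : IsSelfAdjoint Q := cfc_predicate f T
  have hle : Q * T * Q ≤ μ • (Q * Q) := by
    rw [← cfc_id' ℝ T, ← cfc_mul f _ T, ← cfc_mul _ f T, ← cfc_mul f f T, ← cfc_smul μ _ T]
    refine cfc_mono fun s hs ↦ ?_
    by_cases hfs : f s = 0
    · simp [hfs]
    simp only [smul_eq_mul]
    nlinarith [hfμ s hs hfs, mul_self_nonneg (f s)]
  have hQs : ∀ a b : H, ⟪Q a, b⟫_ℂ = ⟪a, Q b⟫_ℂ := hQ.isSymmetric
  have hpos := ((ContinuousLinearMap.le_def _ _).mp hle).re_inner_nonneg_right x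
  simp only [sub_apply, smul_apply, mul_apply_eq_comp] at hpos
  rw [inner_sub_right, map_sub, sub_nonneg, ← Complex.coe_smul, inner_smul_right, ← hQs, ← hQs,
    RCLike.re_to_complex, RCLike.re_to_complex, Complex.re_ofReal_mul] at hpos
  rwa [← inner_self_eq_norm_sq (𝕜 := ℂ)]

lemma IsSelfAdjoint.mul_norm_sq_le_re_inner_of_mem_orthogonal_ker {A : H →L[ℂ] H}
    (hA : IsSelfAdjoint A) {γ : ℝ} (hγ : 0 < γ) (hspec : ∀ t ∈ spectrum ℝ A, t = 0 ∨ γ ≤ t) {ψ : H}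
    (hψ : ψ ∈ (LinearMap.ker (A : H →ₗ[ℂ] H))ᗮ) : γ * ‖ψ‖ ^ 2 ≤ (⟪ψ, A ψ⟫_ℂ).re := by
  -- `cfc g A` is the projection onto `ker A`
  set g : ℝ → ℝ := fun s ↦ max 0 (1 - s / γ)
  have hg : ∀ s ∈ spectrum ℝ A, γ ≤ s → g s = 0 := fun s _ hs ↦
    max_eq_left (sub_nonpos.mpr ((one_le_div hγ).mpr hs))
  have hAg : A * cfc g A = 0 := by
    nth_rw 1 [← cfc_id' ℝ A]
    refine cfc_mul_cfc_eq_zero fun s hs ↦ ?_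
    rcases hspec s hs with rfl | h
    · exact zero_mul _
    · rw [hg s hs h, mul_zero]
  have hψg : ⟪ψ, cfc g A ψ⟫_ℂ = 0 := by
    refine Submodule.inner_left_of_mem_orthogonal ?_ hψ
    exact congr($hAg ψ)
  have hle : algebraMap ℝ (H →L[ℂ] H) γ ≤ A + γ • cfc g A := by
    nth_rw 1 [← cfc_id' ℝ A]
    rw [← cfc_smul γ g A, ← cfc_add (a := A) (fun s ↦ s) (fun s ↦ γ • g s),
      algebraMap_le_cfc_iff _ γ A]
    intro s hs
    rcases hspec s hs with rfl | h
    · simp [g]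
    · simp only [smul_eq_mul]
      nlinarith [le_max_left 0 (1 - s / γ)]
  have := mul_norm_sq_le_re_inner_of_algebraMap_le hle ψ
  rwa [add_apply, smul_apply, inner_add_right, ← Complex.coe_smul, inner_smul_right, hψg,
    mul_zero, add_zero] at this

lemma IsSelfAdjoint.le_of_mem_spectrum_of_lt {T : H →L[ℂ] H} (hT : IsSelfAdjoint T) {Ω : H} {μ : ℝ}
    (hμ : ∀ χ : H, ⟪Ω, χ⟫_ℂ = 0 → μ * ‖χ‖ ^ 2 ≤ (⟪χ, T χ⟫_ℂ).re)
    {s t : ℝ} (hs : s ∈ spectrum ℝ T) (ht : t ∈ spectrum ℝ T) (hst : s < t) : μ ≤ t := by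
  by_contra! htμ
  obtain ⟨m, hsm, hmt⟩ := exists_between hst
  obtain ⟨ν, htν, hνμ⟩ := exists_between htμ
  set f : ℝ → ℝ := fun x ↦ max 0 (m - x)
  set g : ℝ → ℝ := fun x ↦ max 0 (min (x - m) (ν - x))
  have hf : ∀ x, f x ≠ 0 → x < m := fun x hx ↦ by
    by_contra! h; exact hx (max_eq_left (by linarith))
  have hg : ∀ x, g x ≠ 0 → m < x ∧ x < ν := fun x hx ↦ by
    by_contra! h
    refine hx (max_eq_left ?_)
    by_cases hmx : m < x
    · exact (min_le_right _ _).trans (by linarith [h hmx])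
    · exact (min_le_left _ _).trans (by linarith)
  have hfg : ∀ x ∈ spectrum ℝ T, f x * g x = 0 := fun x _ ↦ by
    by_contra h
    obtain ⟨hfx, hgx⟩ := mul_ne_zero_iff.mp h
    linarith [hf x hfx, (hg x hgx).1]
  obtain ⟨x₁, hx₁⟩ := DFunLike.ne_iff.mp
    (cfc_ne_zero_of_mem_spectrum (f := f) hs (by simp [f]; linarith))
  obtain ⟨x₂, hx₂⟩ := DFunLike.ne_iff.mp
    (cfc_ne_zero_of_mem_spectrum (f := g) ht (by simp [g]; constructor <;> linarith))
  have hPQ : ∀ y z : H, ⟪cfc f T y, cfc g T z⟫_ℂ = 0 := fun y z ↦ by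
    have hP : ⟪cfc f T y, cfc g T z⟫_ℂ = ⟪y, cfc f T (cfc g T z)⟫_ℂ :=
      (cfc_predicate f T).isSymmetric y _
    rw [hP, ← mul_apply_eq_comp, cfc_mul_cfc_eq_zero hfg, zero_apply, inner_zero_right]
  have hTQ : ∀ z : H, T (cfc g T z) = cfc g T (T z) := fun z ↦
    congr($(((Commute.refl T).cfc_real g).eq.symm) z)
  obtain ⟨a, b, hne, hΩ⟩ := exists_smul_add_smul_ne_zero_inner_eq_zero (hPQ x₁ x₂) hx₁ hx₂ Ω
  have hupper := hT.re_inner_smul_add_smul_le (hPQ x₁ x₂) (by rw [hTQ]; exact hPQ x₁ (T x₂))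
    (hT.re_inner_cfc_apply_le (by fun_prop)
      (fun x _ hx ↦ (hf x hx |>.trans hmt |>.trans htν).le) x₁)
    (hT.re_inner_cfc_apply_le (by fun_prop) (fun x _ hx ↦ (hg x hx).2.le) x₂) a b
  have hnorm : 0 < ‖a • cfc f T x₁ + b • cfc g T x₂‖ ^ 2 := by positivity
  nlinarith [hμ _ hΩ]

end QuadraticForm

theorem spectral_gap_stability_general
    {H : Type*} [NormedAddCommGroup H] [InnerProductSpace ℂ H] [CompleteSpace H]
    (H₀ V : H →L[ℂ] H) (γ β : ℝ) (Ω : H) (hΩ : ‖Ω‖ = 1)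
    (hH₀sa : IsSelfAdjoint H₀)
    (hker : LinearMap.ker (H₀ : H →ₗ[ℂ] H) = Submodule.span ℂ {Ω})
    (hγ : 0 < γ)
    (hspec : spectrum ℂ H₀ ⊆ (fun t : ℝ => (t : ℂ)) '' ({0} ∪ Set.Ici γ))
    (hVsa : IsSelfAdjoint V) (hβ1 : β < 1)
    (hform : ∀ ψ : H, |(⟪ψ, V ψ⟫_ℂ).re| ≤ β * (⟪ψ, H₀ ψ⟫_ℂ).re)
    (hVΩ : ⟪Ω, V Ω⟫_ℂ = 0)
    (E : ℝ) (hE : E = sInf {t : ℝ | (t : ℂ) ∈ spectrum ℂ (H₀ + V)}) :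
    spectrum ℂ (H₀ + V) ⊆ (fun t : ℝ => (t : ℂ)) '' ({E} ∪ Set.Ici (E + (1 - β) * γ)) ∧
    E ≤ 0 := by
  have hT : IsSelfAdjoint (H₀ + V) := hH₀sa.add hVsa
  have : Nontrivial H := ⟨Ω, 0, norm_ne_zero_iff.mp (by simp [hΩ])⟩
  have hspec₀ : ∀ t ∈ spectrum ℝ H₀, t = 0 ∨ γ ≤ t := fun t ht ↦ by
    obtain ⟨s, hs, hst⟩ := hspec (hH₀sa.coe_mem_spectrum_complex.mpr ht)
    rwa [Complex.ofReal_inj.mp hst] at hs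
  have hreal : {t : ℝ | (t : ℂ) ∈ spectrum ℂ (H₀ + V)} = spectrum ℝ (H₀ + V) :=
    Set.ext fun _ ↦ hT.coe_mem_spectrum_complex
  rw [hreal] at hE
  obtain ⟨hEmem, hEle⟩ : IsLeast (spectrum ℝ (H₀ + V)) E := by
    rw [hE]
    exact (ContinuousFunctionalCalculus.isCompact_spectrum (R := ℝ) (H₀ + V)).isLeast_sInf
      (ContinuousFunctionalCalculus.spectrum_nonempty _ hT)
  have hE0 : E ≤ 0 := by
    have hΩ₀ : H₀ Ω = 0 := LinearMap.mem_ker.mp (hker.ge (Submodule.mem_span_singleton_self Ω))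
    simpa [hΩ, hΩ₀, hVΩ, inner_add_right] using
      mul_norm_sq_le_re_inner_of_algebraMap_le
        ((algebraMap_le_iff_le_spectrum (ha := hT)).mpr hEle) Ω
  have hgap : ∀ χ : H, ⟪Ω, χ⟫_ℂ = 0 → (1 - β) * γ * ‖χ‖ ^ 2 ≤ (⟪χ, (H₀ + V) χ⟫_ℂ).re :=
    fun χ hχ ↦ mul_norm_sq_le_re_inner_add_of_form_bound hβ1.le
      (hH₀sa.mul_norm_sq_le_re_inner_of_mem_orthogonal_ker hγ hspec₀
        (hker ▸ Submodule.mem_orthogonal_singleton_iff_inner_right.mpr hχ)) (hform χ)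
  refine ⟨fun z hz ↦ ?_, hE0⟩
  obtain ⟨t, rfl⟩ : ∃ t : ℝ, (t : ℂ) = z := ⟨z.re, (hT.mem_spectrum_eq_re hz).symm⟩
  have ht : t ∈ spectrum ℝ (H₀ + V) := hT.coe_mem_spectrum_complex.mp hz
  refine ⟨t, ?_, rfl⟩
  rcases (hEle ht).eq_or_lt with rfl | hEt
  · exact Or.inl rfl
  · exact Or.inr (Set.mem_Ici.mpr (by linarith [hT.le_of_mem_spectrum_of_lt hgap hEmem ht hEt]))

/-- Gap stability under a form-bounded perturbation: if `H₀ ≥ 0` has one-dimensional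
kernel `ℂΩ` and `spec(H₀) ⊆ {0} ∪ [γ,∞)`, and `V` is self-adjoint with
`|⟨ψ,Vψ⟩| ≤ β⟨ψ,H₀ψ⟩`, `β < 1`, `⟨Ω,VΩ⟩ = 0`, then with `E = inf spec(H₀+V)` one has
`spec(H₀+V) ⊆ {E} ∪ [E+(1-β)γ, ∞)` and `E ≤ 0`. -/
theorem spectral_gap_stability
    {H : Type*} [NormedAddCommGroup H] [InnerProductSpace ℂ H] [CompleteSpace H]
    (H₀ V : H →L[ℂ] H) (γ β : ℝ) (Ω : H) (hΩ : ‖Ω‖ = 1)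
    (hH₀sa : IsSelfAdjoint H₀)
    (hH₀pos : ∀ ψ : H, 0 ≤ (⟪ψ, H₀ ψ⟫_ℂ).re)
    (hker : LinearMap.ker (H₀ : H →ₗ[ℂ] H) = Submodule.span ℂ {Ω})
    (hγ : 0 < γ)
    (hspec : spectrum ℂ H₀ ⊆ (fun t : ℝ => (t : ℂ)) '' ({0} ∪ Set.Ici γ))
    (hVsa : IsSelfAdjoint V) (hβ0 : 0 ≤ β) (hβ1 : β < 1)
    (hform : ∀ ψ : H, |(⟪ψ, V ψ⟫_ℂ).re| ≤ β * (⟪ψ, H₀ ψ⟫_ℂ).re)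
    (hVΩ : ⟪Ω, V Ω⟫_ℂ = 0)
    (E : ℝ) (hE : E = sInf {t : ℝ | (t : ℂ) ∈ spectrum ℂ (H₀ + V)}) :
    spectrum ℂ (H₀ + V) ⊆ (fun t : ℝ => (t : ℂ)) '' ({E} ∪ Set.Ici (E + (1 - β) * γ)) ∧
    E ≤ 0 :=
  spectral_gap_stability_general H₀ V γ β Ω hΩ hH₀sa hker hγ hspec hVsa hβ1 hform hVΩ E hE
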